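/- The projection of a symmetric matrix S onto the cone of positive semidefinite matrices under the Frobenius norm is V Λ₊ Vᵀ, where S = V Λ Vᵀ is an eigendecomposition and Λ₊ replaces negative eigenvalues by zero: V Λ₊ Vᵀ = argmin_{P ⪰ 0} ‖P − S‖_F. -/

import Mathlib

open Matrix

/-!
Conjugation by the orthogonal matrix `V` preserves the sum of squared entries, so after the
change of basis `Q ↦ Vᵀ Q V` the problem becomes: among PSD matrices `R`, minimise the distance
to `diagonal μ`. Dropping the off-diagonal entries only decreases that distance, and the diagonal
of a PSD matrix is nonnegative, so each diagonal term is at least `(max μₖ 0 - μₖ)²`, which is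
exactly what `diagonal (max μ 0)` attains.
-/

section SumSqEntries

variable {m k R : Type*} [Fintype m] [Fintype k]

theorem sum_sq_entries_eq_trace_transpose_mul [CommSemiring R] (M : Matrix m k R) :
    ∑ a, ∑ b, M a b ^ 2 = trace (Mᵀ * M) := by
  simp only [trace, diag, mul_apply, transpose_apply, sq]
  exact Finset.sum_comm

theorem sum_sq_entries_mul_mul_transpose [CommSemiring R] [DecidableEq k] {V : Matrix m k R}
    (hV : Vᵀ * V = 1) (A : Matrix k k R) :
    ∑ a, ∑ b, (V * A * Vᵀ) a b ^ 2 = ∑ a, ∑ b, A a b ^ 2 := by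
  rw [sum_sq_entries_eq_trace_transpose_mul, sum_sq_entries_eq_trace_transpose_mul]
  calc trace ((V * A * Vᵀ)ᵀ * (V * A * Vᵀ)) = trace (V * (Aᵀ * (Vᵀ * V) * A) * Vᵀ) := by
        simp only [transpose_mul, transpose_transpose, Matrix.mul_assoc]
    _ = trace (Aᵀ * A) := by rw [hV, Matrix.mul_one, trace_mul_cycle, hV, Matrix.one_mul]

theorem sum_sq_entries_diagonal [Semiring R] [DecidableEq k] (f : k → R) :
    ∑ a, ∑ b, diagonal f a b ^ 2 = ∑ a, f a ^ 2 := by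
  refine Finset.sum_congr rfl fun a _ => ?_
  rw [Finset.sum_eq_single a (fun b _ hb => by simp [diagonal_apply_ne' _ hb])
    (fun h => absurd (Finset.mem_univ a) h), diagonal_apply_eq]

theorem sum_sq_diag_le_sum_sq_entries [CommRing R] [LinearOrder R] [IsStrictOrderedRing R]
    (A : Matrix k k R) : ∑ a, A a a ^ 2 ≤ ∑ a, ∑ b, A a b ^ 2 :=
  Finset.sum_le_sum fun a _ =>
    Finset.single_le_sum (f := fun b => A a b ^ 2) (fun _ _ => sq_nonneg _) (Finset.mem_univ a)

end SumSqEntries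

theorem sq_max_zero_sub_le {R : Type*} [CommRing R] [LinearOrder R] [IsStrictOrderedRing R]
    (μ : R) {r : R} (hr : 0 ≤ r) : (max μ 0 - μ) ^ 2 ≤ (r - μ) ^ 2 := by
  rcases le_total μ 0 with h | h
  · rw [max_eq_right h]; nlinarith
  · rw [max_eq_left h, sub_self, zero_pow two_ne_zero]; exact sq_nonneg _

theorem sum_sq_max_zero_sub_le_of_posSemidef {k : Type*} [Fintype k] [DecidableEq k]
    {R : Matrix k k ℝ} (hR : R.PosSemidef) (μ : k → ℝ) :
    ∑ a, (max (μ a) 0 - μ a) ^ 2 ≤ ∑ a, ∑ b, (R - diagonal μ) a b ^ 2 :=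
  calc ∑ a, (max (μ a) 0 - μ a) ^ 2 ≤ ∑ a, (R - diagonal μ) a a ^ 2 :=
        Finset.sum_le_sum fun a _ => by
          simpa only [Matrix.sub_apply, diagonal_apply_eq] using
            sq_max_zero_sub_le (μ a) (hR.diag_nonneg (i := a))
    _ ≤ ∑ a, ∑ b, (R - diagonal μ) a b ^ 2 := sum_sq_diag_le_sum_sq_entries _

/-- The projection of a symmetric matrix `S = V Λ Vᵀ` onto the PSD cone in the
Frobenius norm is `V Λ₊ Vᵀ`, where `Λ₊` replaces negative eigenvalues by zero:
`V Λ₊ Vᵀ` is PSD and minimizes the Frobenius distance to `S` among PSD matrices. -/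
theorem stmt_15 {n : ℕ} (S V : Matrix (Fin n) (Fin n) ℝ) (μ : Fin n → ℝ)
    (hV : Vᵀ * V = 1) (hS : S = V * Matrix.diagonal μ * Vᵀ)
    (P : Matrix (Fin n) (Fin n) ℝ)
    (hP : P = V * Matrix.diagonal (fun k => max (μ k) 0) * Vᵀ) :
    P.PosSemidef ∧
      ∀ Q : Matrix (Fin n) (Fin n) ℝ, Q.PosSemidef →
        ∑ a, ∑ b, (P a b - S a b) ^ 2 ≤ ∑ a, ∑ b, (Q a b - S a b) ^ 2 := by
  have hVt : Vᴴ = Vᵀ := conjTranspose_eq_transpose_of_trivial V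
  refine ⟨?_, fun Q hQ => ?_⟩
  · rw [hP, ← hVt]
    exact (posSemidef_diagonal_iff.mpr fun k => le_max_right _ _).mul_mul_conjTranspose_same V
  have hR : (Vᵀ * Q * V).PosSemidef := by
    simpa only [hVt] using hQ.conjTranspose_mul_mul_same V
  have hPS : P - S = V * diagonal (fun k => max (μ k) 0 - μ k) * Vᵀ := by
    rw [hP, hS, ← diagonal_sub, Matrix.mul_sub, Matrix.sub_mul]
  have hQS : Q - S = V * (Vᵀ * Q * V - diagonal μ) * Vᵀ := by
    have hVV : V * Vᵀ = 1 := mul_eq_one_comm.mp hV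
    rw [hS, Matrix.mul_sub, Matrix.sub_mul]
    simp only [← Matrix.mul_assoc, hVV, Matrix.one_mul]
    rw [Matrix.mul_assoc Q, hVV, Matrix.mul_one]
  calc ∑ a, ∑ b, (P a b - S a b) ^ 2 = ∑ a, ∑ b, (P - S) a b ^ 2 := rfl
    _ = ∑ a, (max (μ a) 0 - μ a) ^ 2 := by
        rw [hPS, sum_sq_entries_mul_mul_transpose hV, sum_sq_entries_diagonal]
    _ ≤ ∑ a, ∑ b, (Vᵀ * Q * V - diagonal μ) a b ^ 2 := sum_sq_max_zero_sub_le_of_posSemidef hR μ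
    _ = ∑ a, ∑ b, (Q a b - S a b) ^ 2 := by
        rw [← sum_sq_entries_mul_mul_transpose hV, ← hQS]; rfl
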